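/- If f ∈ ℱ, then for no pair (ω ∈ C(M,ℝ), α ∈ ℝ with α ≠ 0) does one have Q_ω = α·f. (Proposition 2.3: elements of ℱ are forbidden functions up to nonzero scale.) -/

import Mathlib

open MeasureTheory

variable {M : Type*} [TopologicalSpace M] [MeasurableSpace M]

/-- The transformed Q-curvature `Q_ω = e^{-nω}(Q + Pω)`. -/
noncomputable def Qcurv (n : ℝ) (P : C(M, ℝ) →ₗ[ℝ] C(M, ℝ)) (Q ω : C(M, ℝ)) : C(M, ℝ) :=
  ⟨fun x => Real.exp (-n * ω x) * (Q x + P ω x),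
    (Real.continuous_exp.comp (continuous_const.mul ω.continuous)).mul
      (Q.continuous.add (P ω).continuous)⟩

/-- The conformally rescaled measure `μ_ω`, with density `e^{nω}` w.r.t. `μ`. -/
noncomputable def confMeasure (μ : Measure M) (n : ℝ) (ω : C(M, ℝ)) : Measure M :=
  μ.withDensity fun x => ENNReal.ofReal (Real.exp (n * ω x))

/-- `𝒩(𝒬) = {u ∈ ker P : ∫ u·Q dμ = 0}`. -/
def NQ (μ : Measure M) (P : C(M, ℝ) →ₗ[ℝ] C(M, ℝ)) (Q : C(M, ℝ)) : Set C(M, ℝ) :=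
  {u | P u = 0 ∧ ∫ x, u x * Q x ∂μ = 0}

/-- `ℱ = ⋂_ω ℱ^ω`, where `ℱ^ω` is the set of `f` not `L²(μ_ω)`-orthogonal to `𝒩(𝒬)`. -/
def Fcal (μ : Measure M) (n : ℝ) (P : C(M, ℝ) →ₗ[ℝ] C(M, ℝ)) (Q : C(M, ℝ)) : Set C(M, ℝ) :=
  {f | ∀ ω : C(M, ℝ), ∃ u ∈ NQ μ P Q, ∫ x, f x * u x ∂(confMeasure μ n ω) ≠ 0}

lemma integral_confMeasure [OpensMeasurableSpace M] (μ : Measure M) (n : ℝ) (ω : C(M, ℝ))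
    (g : M → ℝ) : ∫ x, g x ∂(confMeasure μ n ω) = ∫ x, Real.exp (n * ω x) * g x ∂μ := by
  have hdensity : Measurable fun x => ENNReal.ofReal (Real.exp (n * ω x)) :=
    (Real.continuous_exp.comp (continuous_const.mul ω.continuous)).measurable.ennreal_ofReal
  rw [confMeasure, integral_withDensity_eq_integral_toReal_smul hdensity
    (ae_of_all _ fun _ => ENNReal.ofReal_lt_top)]
  simp only [ENNReal.toReal_ofReal (Real.exp_pos _).le, smul_eq_mul]

omit [MeasurableSpace M] in
lemma exp_mul_Qcurv (n : ℝ) (P : C(M, ℝ) →ₗ[ℝ] C(M, ℝ)) (Q ω : C(M, ℝ)) (x : M) :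
    Real.exp (n * ω x) * Qcurv n P Q ω x = Q x + P ω x := by
  simp only [Qcurv, ContinuousMap.coe_mk]
  rw [← mul_assoc, ← Real.exp_add, neg_mul, add_neg_cancel, Real.exp_zero, one_mul]

/-- All dependence on `ω` sits in `∫ (P u) ω dμ`, so the pairing is conformally invariant for
`u ∈ ker P`. -/
lemma integral_Qcurv_mul_confMeasure [OpensMeasurableSpace M] [CompactSpace M] (μ : Measure M)
    [IsFiniteMeasure μ] (n : ℝ) (P : C(M, ℝ) →ₗ[ℝ] C(M, ℝ)) (Q : C(M, ℝ))
    (hPsa : ∀ u v : C(M, ℝ), ∫ x, u x * P v x ∂μ = ∫ x, P u x * v x ∂μ) (ω u : C(M, ℝ)) :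
    ∫ x, Qcurv n P Q ω x * u x ∂(confMeasure μ n ω) =
      ∫ x, u x * Q x ∂μ + ∫ x, P u x * ω x ∂μ := by
  have hintegrable {g : M → ℝ} (hg : Continuous g) : Integrable g μ :=
    hg.integrable_of_hasCompactSupport (.of_compactSpace g)
  calc ∫ x, Qcurv n P Q ω x * u x ∂(confMeasure μ n ω)
      = ∫ x, (u x * Q x + u x * P ω x) ∂μ := by
        rw [integral_confMeasure]
        congr 1 with x
        rw [← mul_assoc, exp_mul_Qcurv]
        ring
    _ = ∫ x, u x * Q x ∂μ + ∫ x, P u x * ω x ∂μ := by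
        rw [integral_add (hintegrable (by fun_prop)) (hintegrable (by fun_prop)), hPsa]

lemma integral_Qcurv_mul_confMeasure_eq_zero [OpensMeasurableSpace M] [CompactSpace M]
    (μ : Measure M) [IsFiniteMeasure μ] (n : ℝ) (P : C(M, ℝ) →ₗ[ℝ] C(M, ℝ)) (Q : C(M, ℝ))
    (hPsa : ∀ u v : C(M, ℝ), ∫ x, u x * P v x ∂μ = ∫ x, P u x * v x ∂μ) (ω : C(M, ℝ))
    {u : C(M, ℝ)} (hu : u ∈ NQ μ P Q) :
    ∫ x, Qcurv n P Q ω x * u x ∂(confMeasure μ n ω) = 0 := by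
  obtain ⟨hPu, huQ⟩ := hu
  simp [integral_Qcurv_mul_confMeasure μ n P Q hPsa, hPu, huQ]

variable [BorelSpace M] [CompactSpace M] [ConnectedSpace M]
variable (μ : Measure M) [IsFiniteMeasure μ] [Measure.IsOpenPosMeasure μ]
variable (n : ℝ) (P : C(M, ℝ) →ₗ[ℝ] C(M, ℝ)) (Q : C(M, ℝ))

theorem stmt5
    (hPsa : ∀ u v : C(M, ℝ), ∫ x, u x * P v x ∂μ = ∫ x, P u x * v x ∂μ)
    (f : C(M, ℝ)) (hf : f ∈ Fcal μ n P Q) :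
    ∀ (ω : C(M, ℝ)) (α : ℝ), α ≠ 0 → Qcurv n P Q ω ≠ α • f := by
  intro ω α hα hQω
  obtain ⟨u, hu, hfu⟩ := hf ω
  have hpairing : α * ∫ x, f x * u x ∂(confMeasure μ n ω) = 0 := by
    rw [← integral_const_mul, ← integral_Qcurv_mul_confMeasure_eq_zero μ n P Q hPsa ω hu, hQω]
    simp only [ContinuousMap.smul_apply, smul_eq_mul, mul_assoc]
  exact hfu ((mul_eq_zero.mp hpairing).resolve_left hα)
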